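/- arXiv:1811.08193 — 7 statements merged into one kernel-verified Lean document; each statement's English description precedes it below -/
import Mathlib

section
/- For n ≥ 2 and the Choi map Φ(A) = (n-1)·Tr(A)·I_n − A on M_n(ℂ), the block matrix [Φ(e_{ij})]_{i,j=1}^{n-1} ∈ M_{n-1}(ℂ) ⊗ M_n(ℂ) is positive semi-definite, with eigenvalues 0 (multiplicity 1) and n−1 (multiplicity n(n-1)−1). -/
open Matrix Polynomial ComplexOrder

/-- The Choi map `A ↦ (n-1)·Tr(A)·I − A` on `M_n(ℂ)`. -/
noncomputable def choiMap (n : ℕ) (A : Matrix (Fin n) (Fin n) ℂ) :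
    Matrix (Fin n) (Fin n) ℂ :=
  (((n : ℂ) - 1) * A.trace) • (1 : Matrix (Fin n) (Fin n) ℂ) - A

/-- The `(n-1)`-block matrix `[Φ(e_{ij})]_{i,j=1}^{n-1}` of the Choi map,
as an element of `M_{n-1}(ℂ) ⊗ M_n(ℂ)`. -/
noncomputable def choiMapBlock (n : ℕ) :
    Matrix (Fin (n - 1) × Fin n) (Fin (n - 1) × Fin n) ℂ :=
  fun p q =>
    choiMap n (Matrix.single (Fin.castLE (Nat.sub_le n 1) p.1)
      (Fin.castLE (Nat.sub_le n 1) q.1) 1) p.2 q.2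

/-!
Since `Φ(e_ij) = (n-1) δ_ij I - e_ij`, the block matrix is `(n-1) I - v v*` with
`v = ∑_{i<n-1} e_i ⊗ e_i`, and `‖v‖² = n-1`. A scalar minus a rank-one matrix `v v*` has
characteristic polynomial `X (X - (n-1))^(N-1)`, so this Hermitian matrix has eigenvalues
`0` and `n-1` only, both nonnegative, hence it is positive semidefinite.
-/

namespace Matrix

variable {n : Type*} [Fintype n] [DecidableEq n]

theorem charpoly_smul_one_sub_vecMulVec {R : Type*} [CommRing R] [Nonempty n] {c : R}
    {u w : n → R} (h : u ⬝ᵥ w = c) :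
    (c • (1 : Matrix n n R) - vecMulVec u w).charpoly =
      X * (X - C c) ^ (Fintype.card n - 1) := by
  have hshift : c • (1 : Matrix n n R) - vecMulVec u w = vecMulVec (-u) w - scalar n (-c) := by
    rw [neg_vecMulVec, scalar_apply, ← smul_one_eq_diagonal, neg_smul]
    abel
  obtain ⟨k, hk⟩ : ∃ k, Fintype.card n = k + 1 :=
    Nat.exists_eq_add_one_of_ne_zero Fintype.card_ne_zero
  rw [hshift, charpoly_sub_scalar, charpoly_vecMulVec, neg_dotProduct, h, hk,
    Nat.add_sub_cancel]
  simp only [pow_succ, sub_comp, mul_comp, pow_comp, X_comp, neg_comp, C_comp, map_neg,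
    smul_eq_C_mul]
  ring

theorem IsHermitian.posSemidef_of_forall_mem_roots_charpoly_nonneg {𝕜 : Type*} [RCLike 𝕜]
    {A : Matrix n n 𝕜} (hA : A.IsHermitian) (h : ∀ z ∈ A.charpoly.roots, 0 ≤ z) :
    A.PosSemidef := by
  rw [hA.posSemidef_iff_eigenvalues_nonneg]
  intro i
  refine RCLike.ofReal_nonneg.mp (h _ ?_)
  rw [hA.roots_charpoly_eq_eigenvalues]
  exact Multiset.mem_map_of_mem _ (Finset.mem_univ_val i)

end Matrix

noncomputable def choiMapBlockVector (n : ℕ) : Fin (n - 1) × Fin n → ℂ :=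
  fun p => if Fin.castLE (Nat.sub_le n 1) p.1 = p.2 then 1 else 0

theorem choiMap_single (n : ℕ) (a b : Fin n) :
    choiMap n (single a b 1) = (if a = b then (n : ℂ) - 1 else 0) • 1 - single a b 1 := by
  by_cases h : a = b
  · simp [choiMap, h]
  · simp [choiMap, h, trace_single_eq_of_ne]

theorem choiMapBlock_eq_smul_one_sub_vecMulVec (n : ℕ) :
    choiMapBlock n = ((n : ℂ) - 1) • 1 -
      vecMulVec (choiMapBlockVector n) (star (choiMapBlockVector n)) := by
  ext ⟨i, k⟩ ⟨j, l⟩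
  simp only [choiMapBlock, choiMap_single, Fin.castLE_inj, Matrix.sub_apply, Matrix.smul_apply,
    one_apply, single_apply, vecMulVec_apply, choiMapBlockVector, Prod.mk.injEq, Pi.star_apply]
  split_ifs <;> simp_all

theorem choiMapBlockVector_dotProduct_star {n : ℕ} (hn : 1 ≤ n) :
    choiMapBlockVector n ⬝ᵥ star (choiMapBlockVector n) = (n : ℂ) - 1 := by
  simp [choiMapBlockVector, dotProduct, Fintype.sum_prod_type, Nat.cast_sub hn]

theorem choiMap_block_posSemidef_and_eigenvalues (n : ℕ) (hn : 2 ≤ n) :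
    (choiMapBlock n).PosSemidef ∧
      (choiMapBlock n).charpoly =
        X * (X - C ((n : ℂ) - 1)) ^ (n * (n - 1) - 1) := by
  have : Nonempty (Fin (n - 1) × Fin n) := ⟨(⟨0, by omega⟩, ⟨0, by omega⟩)⟩
  have hcharpoly :
      (choiMapBlock n).charpoly = X * (X - C ((n : ℂ) - 1)) ^ (n * (n - 1) - 1) := by
    rw [choiMapBlock_eq_smul_one_sub_vecMulVec,
      charpoly_smul_one_sub_vecMulVec (choiMapBlockVector_dotProduct_star (by omega)),
      Fintype.card_prod, Fintype.card_fin, Fintype.card_fin, Nat.mul_comm]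
  have hherm : (choiMapBlock n).IsHermitian := by
    rw [choiMapBlock_eq_smul_one_sub_vecMulVec]
    exact (isHermitian_one.smul (by simp [IsSelfAdjoint])).sub
      (posSemidef_vecMulVec_self_star _).isHermitian
  refine ⟨hherm.posSemidef_of_forall_mem_roots_charpoly_nonneg fun z hz => ?_, hcharpoly⟩
  have hroot : z * (z - ((n : ℂ) - 1)) ^ (n * (n - 1) - 1) = 0 := by
    simpa [hcharpoly] using (mem_roots'.1 hz).2
  rcases mul_eq_zero.1 hroot with rfl | hpow
  · rfl
  · rw [sub_eq_zero.1 (pow_eq_zero_iff'.1 hpow).1, ← Nat.cast_pred (by omega)]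
    exact Nat.cast_nonneg' _
end

section
/- For n ≥ 2 and the Choi map Φ(A) = (n-1)·Tr(A)·I_n − A on M_n(ℂ), the full Choi matrix [Φ(e_{ij})]_{i,j=1}^{n} is not positive semi-definite; hence Φ is not completely positive. -/
open Matrix ComplexOrder

/-- The full Choi matrix `[Φ(e_{ij})]_{i,j=1}^{n}` of the Choi map. -/
noncomputable def choiMapChoiMatrix (n : ℕ) :
    Matrix (Fin n × Fin n) (Fin n × Fin n) ℂ :=
  fun p q => choiMap n (Matrix.single p.1 q.1 1) p.2 q.2

/-! Test the Choi matrix against `vec 1`, the (unnormalized) maximally entangled vector: the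
quadratic form picks out the entries `Φ(e_ij)_ij`, i.e. `(n-1)·δ_ij - 1`, which add up to
`n(n-1) - n² = -n < 0`. -/

theorem Matrix.star_vec_one_dotProduct_mulVec_vec_one {ι R : Type*} [Fintype ι]
    [DecidableEq ι] [Semiring R] [StarRing R] (M : Matrix (ι × ι) (ι × ι) R) :
    star (vec (1 : Matrix ι ι R)) ⬝ᵥ M *ᵥ vec 1 = ∑ i, ∑ j, M (i, i) (j, j) := by
  simp [dotProduct, mulVec, Fintype.sum_prod_type, one_apply, apply_ite star]

theorem choiMapChoiMatrix_apply_diag {n : ℕ} (i j : Fin n) :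
    choiMapChoiMatrix n (i, i) (j, j) = ((n : ℂ) - 1) * (if i = j then 1 else 0) - 1 := by
  by_cases hij : i = j
  · subst hij
    simp [choiMapChoiMatrix, choiMap]
  · simp [choiMapChoiMatrix, choiMap, hij, trace_single_eq_of_ne]

theorem sum_choiMapChoiMatrix_apply_diag {n : ℕ} (i : Fin n) :
    ∑ j, choiMapChoiMatrix n (i, i) (j, j) = -1 := by
  simp [choiMapChoiMatrix_apply_diag, Finset.sum_sub_distrib]

theorem choiMap_not_completely_positive (n : ℕ) (hn : 2 ≤ n) :
    ¬ (choiMapChoiMatrix n).PosSemidef := by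
  intro hpsd
  have hnonneg := hpsd.dotProduct_mulVec_nonneg (vec 1)
  simp only [star_vec_one_dotProduct_mulVec_vec_one, sum_choiMapChoiMatrix_apply_diag,
    Finset.sum_const, Finset.card_univ, Fintype.card_fin, nsmul_eq_mul, mul_neg, mul_one,
    Left.nonneg_neg_iff, Nat.cast_nonpos] at hnonneg
  omega
end

section
/- For λ ∈ ℝ, n ≥ 2 and 1 ≤ k ≤ n, the map Ψ_λ(A) = (λ/n)·Tr(A)·I_n + (1−λ)A on M_n(ℂ) has block matrix [Ψ_λ(e_{ij})]_{i,j=1}^{k} positive semi-definite if and only if 0 ≤ λ ≤ 1 + 1/(nk−1). -/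
open Matrix ComplexOrder

/-- The Tomiyama map `Ψ_λ(A) = (λ/n)·Tr(A)·I_n + (1−λ)·A` on `M_n(ℂ)`. -/
noncomputable def tomiyamaMap (n : ℕ) (lam : ℝ) (A : Matrix (Fin n) (Fin n) ℂ) :
    Matrix (Fin n) (Fin n) ℂ :=
  (((lam : ℂ) / n) * A.trace) • (1 : Matrix (Fin n) (Fin n) ℂ) + (1 - (lam : ℂ)) • A

/-- The `k`-block matrix `[Ψ_λ(e_{ij})]_{i,j=1}^{k}` of the Tomiyama map,
as an element of `M_k(ℂ) ⊗ M_n(ℂ)`. -/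
noncomputable def tomiyamaBlock (n k : ℕ) (hk : k ≤ n) (lam : ℝ) :
    Matrix (Fin k × Fin n) (Fin k × Fin n) ℂ :=
  fun p q =>
    tomiyamaMap n lam
      (Matrix.single (Fin.castLE hk p.1) (Fin.castLE hk q.1) 1) p.2 q.2

lemma block_apply (n k : ℕ) (hk : k ≤ n) (lam : ℝ) (p q : Fin k × Fin n) :
    tomiyamaBlock n k hk lam p q =
      (if p = q then ((lam : ℂ)/n) else 0) +
      (if p.2 = Fin.castLE hk p.1 then 1 else 0) * (if q.2 = Fin.castLE hk q.1 then 1 else 0) * (1 - (lam:ℂ)) := by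
  obtain ⟨i, a⟩ := p; obtain ⟨j, b⟩ := q
  simp only [tomiyamaBlock, tomiyamaMap, Matrix.add_apply, Matrix.smul_apply,
    Matrix.trace, Matrix.diag, Matrix.single, Matrix.one_apply, smul_eq_mul]
  have hs : (∑ x : Fin n, Matrix.of (fun a b => if Fin.castLE hk i = a ∧ Fin.castLE hk j = b then (1:ℂ) else 0) x x) = if i = j then (1:ℂ) else 0 := by
    rcases eq_or_ne i j with rfl | h
    · simp
    · rw [if_neg h, Finset.sum_eq_zero]
      intro x _
      simp only [Matrix.of_apply, ite_eq_right_iff, and_imp]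
      rintro rfl e
      exact absurd (Fin.castLE_injective hk e.symm) h
  rw [hs]; clear hs
  simp only [Prod.mk.injEq]
  by_cases h3 : Fin.castLE hk i = a <;> by_cases h4 : Fin.castLE hk j = b <;>
    rcases eq_or_ne i j with rfl | h1 <;> rcases eq_or_ne a b with rfl | h2 <;>
    simp_all [eq_comm]

lemma quad (n k : ℕ) (hk : k ≤ n) (lam : ℝ) (x : Fin k × Fin n → ℂ) :
    star x ⬝ᵥ (tomiyamaBlock n k hk lam) *ᵥ x =
      (((lam/n) * ∑ p, Complex.normSq (x p)
        + (1-lam) * Complex.normSq (∑ i, x (i, Fin.castLE hk i)) : ℝ) : ℂ) := by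
  have hv : ∀ f : Fin k × Fin n → ℂ,
      (∑ p : Fin k × Fin n, (if p.2 = Fin.castLE hk p.1 then (1:ℂ) else 0) * f p)
        = ∑ i, f (i, Fin.castLE hk i) := by
    intro f
    rw [Fintype.sum_prod_type]
    refine Finset.sum_congr rfl fun i _ => ?_
    simp [Finset.sum_ite_eq']
  set s := ∑ i, x (i, Fin.castLE hk i) with hsdef
  have step : ∀ p : Fin k × Fin n,
      (∑ q : Fin k × Fin n, tomiyamaBlock n k hk lam p q * x q)
        = ((lam:ℂ)/n) * x p
          + (if p.2 = Fin.castLE hk p.1 then (1:ℂ) else 0) * ((1 - (lam:ℂ)) * s) := by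
    intro p
    simp only [block_apply, add_mul, Finset.sum_add_distrib]
    congr 1
    · simp [ite_mul, zero_mul, Finset.sum_ite_eq]
    · calc (∑ q : Fin k × Fin n,
            (if p.2 = Fin.castLE hk p.1 then (1:ℂ) else 0) *
              (if q.2 = Fin.castLE hk q.1 then (1:ℂ) else 0) * (1 - (lam:ℂ)) * x q)
          = (if p.2 = Fin.castLE hk p.1 then (1:ℂ) else 0) *
              ((1 - (lam:ℂ)) * ∑ q : Fin k × Fin n,
                (if q.2 = Fin.castLE hk q.1 then (1:ℂ) else 0) * x q) := by
            rw [Finset.mul_sum, Finset.mul_sum]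
            exact Finset.sum_congr rfl fun q _ => by ring
        _ = (if p.2 = Fin.castLE hk p.1 then (1:ℂ) else 0) * ((1 - (lam:ℂ)) * s) := by
            rw [hv, hsdef]
  calc star x ⬝ᵥ (tomiyamaBlock n k hk lam) *ᵥ x
      = ∑ p : Fin k × Fin n, (starRingEnd ℂ) (x p) *
          (((lam:ℂ)/n) * x p
            + (if p.2 = Fin.castLE hk p.1 then (1:ℂ) else 0) * ((1 - (lam:ℂ)) * s)) := by
        simp only [dotProduct, mulVec, Pi.star_apply, RCLike.star_def]
        exact Finset.sum_congr rfl fun p _ => by rw [step p]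
    _ = ((lam:ℂ)/n) * (∑ p : Fin k × Fin n, (starRingEnd ℂ) (x p) * x p)
          + (1 - (lam:ℂ)) * ((starRingEnd ℂ) s * s) := by
        simp only [mul_add, Finset.sum_add_distrib]
        congr 1
        · rw [Finset.mul_sum]
          exact Finset.sum_congr rfl fun p _ => by ring
        · rw [show (∑ p : Fin k × Fin n, (starRingEnd ℂ) (x p) *
              ((if p.2 = Fin.castLE hk p.1 then (1:ℂ) else 0) * ((1 - (lam:ℂ)) * s)))
            = ∑ p : Fin k × Fin n, (if p.2 = Fin.castLE hk p.1 then (1:ℂ) else 0) *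
                ((starRingEnd ℂ) (x p) * ((1 - (lam:ℂ)) * s)) from
            Finset.sum_congr rfl fun p _ => by ring, hv]
          rw [hsdef, map_sum, ← Finset.sum_mul]
          ring
    _ = _ := by
        push_cast
        simp only [← Complex.normSq_eq_conj_mul_self]

lemma herm (n k : ℕ) (hk : k ≤ n) (lam : ℝ) : (tomiyamaBlock n k hk lam).IsHermitian := by
  ext p q
  simp only [Matrix.conjTranspose_apply, block_apply]
  split_ifs with h1 h2 h3 <;>
    simp_all [eq_comm, map_add, _root_.map_mul, map_sub, _root_.map_one, map_zero, map_div₀,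
      Complex.conj_ofReal]

lemma cs_bound (n k : ℕ) (hk : k ≤ n) (x : Fin k × Fin n → ℂ) :
    Complex.normSq (∑ i, x (i, Fin.castLE hk i)) ≤ k * ∑ p, Complex.normSq (x p) := by
  have e1 : Complex.normSq (∑ i, x (i, Fin.castLE hk i)) = ‖∑ i, x (i, Fin.castLE hk i)‖ ^ 2 := by
    rw [Complex.normSq_eq_norm_sq]
  rw [e1]
  have h1 : ‖∑ i, x (i, Fin.castLE hk i)‖ ^ 2 ≤ (∑ i : Fin k, ‖x (i, Fin.castLE hk i)‖) ^ 2 :=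
    pow_le_pow_left₀ (norm_nonneg _) (norm_sum_le _ _) 2
  have h2 : (∑ i : Fin k, ‖x (i, Fin.castLE hk i)‖) ^ 2
      ≤ k * ∑ i : Fin k, ‖x (i, Fin.castLE hk i)‖ ^ 2 := by
    simpa using sq_sum_le_card_mul_sum_sq (s := (Finset.univ : Finset (Fin k)))
      (f := fun i => ‖x (i, Fin.castLE hk i)‖)
  have h3 : (∑ i : Fin k, ‖x (i, Fin.castLE hk i)‖ ^ 2) ≤ ∑ p, Complex.normSq (x p) := by
    rw [Fintype.sum_prod_type]
    refine Finset.sum_le_sum fun i _ => ?_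
    calc ‖x (i, Fin.castLE hk i)‖ ^ 2 = Complex.normSq (x (i, Fin.castLE hk i)) := by
          rw [Complex.normSq_eq_norm_sq]
      _ ≤ ∑ a, Complex.normSq (x (i, a)) :=
          Finset.single_le_sum (f := fun a => Complex.normSq (x (i, a)))
            (fun a _ => Complex.normSq_nonneg _) (Finset.mem_univ _)
  have hk0 : (0:ℝ) ≤ (k:ℝ) := Nat.cast_nonneg k
  linarith [mul_le_mul_of_nonneg_left h3 hk0]

theorem tomiyama_block_posSemidef_iff (n k : ℕ) (hn : 2 ≤ n) (hk1 : 1 ≤ k)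
    (hk : k ≤ n) (lam : ℝ) :
    (tomiyamaBlock n k hk lam).PosSemidef ↔
      0 ≤ lam ∧ lam ≤ 1 + 1 / (n * k - 1 : ℝ) := by
  have hN : (2:ℝ) ≤ (n:ℝ) := by exact_mod_cast hn
  have hK : (1:ℝ) ≤ (k:ℝ) := by exact_mod_cast hk1
  have hN0 : (0:ℝ) < (n:ℝ) := by linarith
  have hpos : (0:ℝ) < (n:ℝ) * (k:ℝ) - 1 := by nlinarith
  constructor
  · intro hP; obtain ⟨hH, hQ⟩ := Matrix.posSemidef_iff_dotProduct_mulVec.mp hP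
    constructor
    · -- test vector: indicator at ((0 : Fin k), (1 : Fin n))
      have hx := hQ (fun p : Fin k × Fin n =>
        if p = (⟨⟨0, by omega⟩, ⟨1, by omega⟩⟩ : Fin k × Fin n) then (1:ℂ) else 0)
      rw [quad, Complex.zero_le_real] at hx
      have hNsum : (∑ p : Fin k × Fin n, Complex.normSq
          (if p = (⟨⟨0, by omega⟩, ⟨1, by omega⟩⟩ : Fin k × Fin n) then (1:ℂ) else 0)) = 1 := by
        simp [apply_ite Complex.normSq, Finset.sum_ite_eq']
      have hssum : (∑ i : Fin k,
          (if (Prod.mk i (Fin.castLE hk i)) = (⟨⟨0, by omega⟩, ⟨1, by omega⟩⟩ : Fin k × Fin n)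
            then (1:ℂ) else 0)) = 0 := by
        apply Finset.sum_eq_zero
        intro i _
        rw [if_neg]
        simp only [Prod.mk.injEq, Fin.ext_iff, Fin.coe_castLE, not_and]
        intro h1
        omega
      rw [hNsum, hssum] at hx
      simp only [Complex.normSq_zero, mul_zero, add_zero, mul_one] at hx
      rcases div_nonneg_iff.mp hx with ⟨h, _⟩ | ⟨_, h2⟩
      · exact h
      · linarith
    · -- test vector: v
      have hx := hQ (fun p => if p.2 = Fin.castLE hk p.1 then (1:ℂ) else 0)
      rw [quad] at hx
      rw [Complex.zero_le_real] at hx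
      have hNsum : (∑ p : Fin k × Fin n,
          Complex.normSq (if p.2 = Fin.castLE hk p.1 then (1:ℂ) else 0)) = (k:ℝ) := by
        rw [Fintype.sum_prod_type]
        simp [apply_ite Complex.normSq, Finset.sum_ite_eq']
      rw [hNsum] at hx
      norm_num at hx
      -- hx : 0 ≤ lam / n * k + (1 - lam) * (k * k)
      have hx2' : 0 ≤ lam * (k:ℝ) + (1 - lam) * ((k:ℝ) * (k:ℝ)) * (n:ℝ) := by
        have h := mul_nonneg hN0.le hx
        have he : (n:ℝ) * (lam / (n:ℝ) * (k:ℝ) + (1 - lam) * ((k:ℝ) * (k:ℝ)))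
            = lam * (k:ℝ) + (1 - lam) * ((k:ℝ) * (k:ℝ)) * (n:ℝ) := by
          field_simp
        linarith [he ▸ h]
      rw [show 1 + 1 / ((n:ℝ) * (k:ℝ) - 1) = ((n:ℝ) * (k:ℝ)) / ((n:ℝ) * (k:ℝ) - 1) by
        field_simp; ring]
      rw [le_div_iff₀ hpos]
      nlinarith [hx2', hK, hN]
  · rintro ⟨h0, h1⟩
    refine Matrix.posSemidef_iff_dotProduct_mulVec.mpr ⟨herm n k hk lam, fun x => ?_⟩
    rw [quad]
    apply Complex.zero_le_real.mpr
    set Nx := ∑ p : Fin k × Fin n, Complex.normSq (x p) with hNx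
    set S := Complex.normSq (∑ i, x (i, Fin.castLE hk i)) with hS
    have hN0' : 0 ≤ Nx := Finset.sum_nonneg fun p _ => Complex.normSq_nonneg _
    have hS0 : 0 ≤ S := Complex.normSq_nonneg _
    have hSN : S ≤ (k:ℝ) * Nx := cs_bound n k hk x
    rcases le_or_gt lam 1 with hl | hl
    · exact add_nonneg (mul_nonneg (div_nonneg h0 hN0.le) hN0')
        (mul_nonneg (by linarith) hS0)
    · have hml : lam * ((n:ℝ) * (k:ℝ) - 1) ≤ (n:ℝ) * (k:ℝ) := by
        have h2 : (lam - 1) * ((n:ℝ) * (k:ℝ) - 1) ≤ 1 := by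
          rw [← le_div_iff₀ hpos] at *
          linarith
        nlinarith
      have key : 0 ≤ lam / (n:ℝ) + (1 - lam) * (k:ℝ) := by
        have he : lam / (n:ℝ) + (1 - lam) * (k:ℝ)
            = ((n:ℝ) * (k:ℝ) - lam * ((n:ℝ) * (k:ℝ) - 1)) / (n:ℝ) := by
          field_simp; ring
        rw [he]
        exact div_nonneg (by linarith) hN0.le
      have t1 : (1 - lam) * ((k:ℝ) * Nx) ≤ (1 - lam) * S :=
        mul_le_mul_of_nonpos_left hSN (by linarith)
      have t2 : 0 ≤ (lam / (n:ℝ) + (1 - lam) * (k:ℝ)) * Nx := mul_nonneg key hN0'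
      have t2' : (lam / (n:ℝ) + (1 - lam) * (k:ℝ)) * Nx
          = lam / (n:ℝ) * Nx + (1 - lam) * ((k:ℝ) * Nx) := by ring
      linarith [t1, t2, t2']
end

section
/- Let a, b, n ≥ 1, k = a+b, and let C ∈ M_n(ℂ)^{⊗(k+1)}. Then C commutes with conj(U)^{⊗(a+1)} ⊗ U^{⊗b} for all unitary U ∈ M_n(ℂ) if and only if the partial transpose (θ_n^{⊗(a+1)} ⊗ id^{⊗b})(C) commutes with U^{⊗(k+1)} for all unitary U. -/
open Matrix

/-- `conj(U)^{⊗(a+1)} ⊗ U^{⊗b}` acting on `(ℂⁿ)^{⊗(a+b+1)}`. -/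
noncomputable def mixedKron (n a b : ℕ) (U : Matrix (Fin n) (Fin n) ℂ) :
    Matrix (Fin (a + b + 1) → Fin n) (Fin (a + b + 1) → Fin n) ℂ :=
  fun f g => ∏ i : Fin (a + b + 1),
    if (i : ℕ) < a + 1 then (starRingEnd ℂ) (U (f i) (g i)) else U (f i) (g i)

/-- `U^{⊗(k+1)}` acting on `(ℂⁿ)^{⊗(k+1)}`, with `k = a+b`. -/
noncomputable def kronPow (n k : ℕ) (U : Matrix (Fin n) (Fin n) ℂ) :
    Matrix (Fin (k + 1) → Fin n) (Fin (k + 1) → Fin n) ℂ :=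
  fun f g => ∏ i : Fin (k + 1), U (f i) (g i)

/-- The partial transpose `θ_n^{⊗(a+1)} ⊗ id^{⊗b}`, transposing the first `a+1`
tensor factors. -/
def partialTranspose (n a b : ℕ)
    (C : Matrix (Fin (a + b + 1) → Fin n) (Fin (a + b + 1) → Fin n) ℂ) :
    Matrix (Fin (a + b + 1) → Fin n) (Fin (a + b + 1) → Fin n) ℂ :=
  fun f g => C (fun i => if (i : ℕ) < a + 1 then g i else f i)
               (fun i => if (i : ℕ) < a + 1 then f i else g i)

namespace PTAux

open Kronecker

variable {n : ℕ}

/-- Tensor power of a matrix, acting on functions. -/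
noncomputable def pw (τ : Type*) [Fintype τ] (N : Matrix (Fin n) (Fin n) ℂ) :
    Matrix (τ → Fin n) (τ → Fin n) ℂ := Matrix.of fun x y => ∏ i, N (x i) (y i)

lemma pw_mul (τ : Type*) [Fintype τ] [DecidableEq τ] (M N : Matrix (Fin n) (Fin n) ℂ) :
    pw τ M * pw τ N = pw τ (M * N) := by
  ext x y
  simp only [pw, Matrix.mul_apply, Matrix.of_apply]
  rw [Finset.prod_univ_sum, Fintype.piFinset_univ]
  simp [Finset.prod_mul_distrib]

lemma pw_one (τ : Type*) [Fintype τ] [DecidableEq τ] :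
    pw (n := n) τ 1 = 1 := by
  ext x y
  simp only [pw, Matrix.of_apply, Matrix.one_apply]
  rw [Finset.prod_boole]
  simp [funext_iff]

lemma pw_transpose (τ : Type*) [Fintype τ] (N : Matrix (Fin n) (Fin n) ℂ) :
    (pw τ N)ᵀ = pw τ Nᵀ := by
  ext x y; rfl

/-- Partial "swap" (transpose on the first factor) in product coordinates. -/
def sw {σ₁ σ₂ : Type*} (X : Matrix (σ₁ × σ₂) (σ₁ × σ₂) ℂ) :
    Matrix (σ₁ × σ₂) (σ₁ × σ₂) ℂ :=
  Matrix.of fun q r => X (r.1, q.2) (q.1, r.2)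

lemma sw_sw {σ₁ σ₂ : Type*} (X : Matrix (σ₁ × σ₂) (σ₁ × σ₂) ℂ) : sw (sw X) = X := rfl

variable {σ₁ σ₂ : Type*} [Fintype σ₁] [Fintype σ₂] [DecidableEq σ₁] [DecidableEq σ₂]

lemma sw_mul_right (X : Matrix (σ₁ × σ₂) (σ₁ × σ₂) ℂ)
    (A : Matrix σ₁ σ₁ ℂ) (B : Matrix σ₂ σ₂ ℂ) :
    sw (X * (A ⊗ₖ B)) = (Aᵀ ⊗ₖ (1 : Matrix σ₂ σ₂ ℂ)) * sw X * ((1 : Matrix σ₁ σ₁ ℂ) ⊗ₖ B) := by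
  ext ⟨u, v⟩ ⟨u', v'⟩
  simp only [sw, Matrix.of_apply, Matrix.mul_apply, Matrix.kroneckerMap_apply,
    Matrix.one_apply, Matrix.transpose_apply, Fintype.sum_prod_type]
  simp only [Finset.sum_mul, Finset.mul_sum, mul_ite, mul_zero, ite_mul, zero_mul,
    Finset.sum_ite_eq, Finset.sum_ite_eq', Finset.mem_univ, if_true]
  conv_rhs => rw [Finset.sum_comm]
  simp only [Finset.sum_ite_eq', Finset.mem_univ, if_true]
  rw [Finset.sum_comm]
  apply Finset.sum_congr rfl; intro s _
  apply Finset.sum_congr rfl; intro t _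
  ring

lemma sw_mul_left (X : Matrix (σ₁ × σ₂) (σ₁ × σ₂) ℂ)
    (A : Matrix σ₁ σ₁ ℂ) (B : Matrix σ₂ σ₂ ℂ) :
    sw ((A ⊗ₖ B) * X) = ((1 : Matrix σ₁ σ₁ ℂ) ⊗ₖ B) * sw X * (Aᵀ ⊗ₖ (1 : Matrix σ₂ σ₂ ℂ)) := by
  ext ⟨u, v⟩ ⟨u', v'⟩
  simp only [sw, Matrix.of_apply, Matrix.mul_apply, Matrix.kroneckerMap_apply,
    Matrix.one_apply, Matrix.transpose_apply, Fintype.sum_prod_type]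
  simp only [Finset.sum_mul, Finset.mul_sum, mul_ite, mul_zero, ite_mul, zero_mul,
    Finset.sum_ite_eq, Finset.sum_ite_eq', Finset.mem_univ, if_true]
  conv_rhs => rw [Finset.sum_comm]
  simp only [Finset.sum_ite_irrel, Finset.sum_const_zero, Finset.sum_ite_eq,
    Finset.mem_univ, if_true]
  apply Finset.sum_congr rfl; intro s _
  apply Finset.sum_congr rfl; intro t _
  ring

lemma key (X : Matrix (σ₁ × σ₂) (σ₁ × σ₂) ℂ) (A G : Matrix σ₁ σ₁ ℂ) (B : Matrix σ₂ σ₂ ℂ)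
    (h1 : G * Aᵀ = 1) (h2 : Aᵀ * G = 1) :
    Commute X (A ⊗ₖ B) ↔ Commute (sw X) (G ⊗ₖ B) := by
  have hGB : (G ⊗ₖ B) = ((1 : Matrix σ₁ σ₁ ℂ) ⊗ₖ B) * (G ⊗ₖ (1 : Matrix σ₂ σ₂ ℂ)) := by
    rw [← Matrix.mul_kronecker_mul, Matrix.one_mul, Matrix.mul_one]
  have hGB' : (G ⊗ₖ B) = (G ⊗ₖ (1 : Matrix σ₂ σ₂ ℂ)) * ((1 : Matrix σ₁ σ₁ ℂ) ⊗ₖ B) := by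
    rw [← Matrix.mul_kronecker_mul, Matrix.one_mul, Matrix.mul_one]
  have hAG : (Aᵀ ⊗ₖ (1 : Matrix σ₂ σ₂ ℂ)) * (G ⊗ₖ (1 : Matrix σ₂ σ₂ ℂ)) = 1 := by
    rw [← Matrix.mul_kronecker_mul, h2, Matrix.mul_one, Matrix.one_kronecker_one]
  have hGA : (G ⊗ₖ (1 : Matrix σ₂ σ₂ ℂ)) * (Aᵀ ⊗ₖ (1 : Matrix σ₂ σ₂ ℂ)) = 1 := by
    rw [← Matrix.mul_kronecker_mul, h1, Matrix.mul_one, Matrix.one_kronecker_one]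
  constructor
  · intro h
    have h' := congrArg sw h.eq
    rw [sw_mul_right, sw_mul_left] at h'
    show sw X * (G ⊗ₖ B) = (G ⊗ₖ B) * sw X
    calc sw X * (G ⊗ₖ B)
        = (G ⊗ₖ (1 : Matrix σ₂ σ₂ ℂ)) * ((Aᵀ ⊗ₖ (1 : Matrix σ₂ σ₂ ℂ)) * sw X *
            ((1 : Matrix σ₁ σ₁ ℂ) ⊗ₖ B)) * (G ⊗ₖ (1 : Matrix σ₂ σ₂ ℂ)) := by
          rw [hGB]
          simp only [← Matrix.mul_assoc]
          rw [show (G ⊗ₖ (1 : Matrix σ₂ σ₂ ℂ)) * (Aᵀ ⊗ₖ (1 : Matrix σ₂ σ₂ ℂ)) * sw X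
              = sw X from by rw [hGA, Matrix.one_mul]]
      _ = (G ⊗ₖ (1 : Matrix σ₂ σ₂ ℂ)) * (((1 : Matrix σ₁ σ₁ ℂ) ⊗ₖ B) * sw X *
            (Aᵀ ⊗ₖ (1 : Matrix σ₂ σ₂ ℂ))) * (G ⊗ₖ (1 : Matrix σ₂ σ₂ ℂ)) := by rw [h']
      _ = (G ⊗ₖ B) * sw X := by
          rw [hGB']
          simp only [Matrix.mul_assoc]
          rw [show (Aᵀ ⊗ₖ (1 : Matrix σ₂ σ₂ ℂ)) * (G ⊗ₖ (1 : Matrix σ₂ σ₂ ℂ)) = 1 from hAG,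
            Matrix.mul_one]
  · intro h
    have h' : sw X * (G ⊗ₖ B) = (G ⊗ₖ B) * sw X := h.eq
    have goal : sw (X * (A ⊗ₖ B)) = sw ((A ⊗ₖ B) * X) := by
      rw [sw_mul_right, sw_mul_left]
      calc (Aᵀ ⊗ₖ (1 : Matrix σ₂ σ₂ ℂ)) * sw X * ((1 : Matrix σ₁ σ₁ ℂ) ⊗ₖ B)
          = (Aᵀ ⊗ₖ (1 : Matrix σ₂ σ₂ ℂ)) * (sw X * (G ⊗ₖ B)) * (Aᵀ ⊗ₖ (1 : Matrix σ₂ σ₂ ℂ)) := by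
            rw [hGB]
            simp only [Matrix.mul_assoc]
            rw [show (G ⊗ₖ (1 : Matrix σ₂ σ₂ ℂ)) * (Aᵀ ⊗ₖ (1 : Matrix σ₂ σ₂ ℂ)) = 1 from hGA,
              Matrix.mul_one]
        _ = (Aᵀ ⊗ₖ (1 : Matrix σ₂ σ₂ ℂ)) * ((G ⊗ₖ B) * sw X) * (Aᵀ ⊗ₖ (1 : Matrix σ₂ σ₂ ℂ)) := by
            rw [h']
        _ = ((1 : Matrix σ₁ σ₁ ℂ) ⊗ₖ B) * sw X * (Aᵀ ⊗ₖ (1 : Matrix σ₂ σ₂ ℂ)) := by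
            rw [hGB']
            simp only [← Matrix.mul_assoc]
            rw [show (Aᵀ ⊗ₖ (1 : Matrix σ₂ σ₂ ℂ)) * (G ⊗ₖ (1 : Matrix σ₂ σ₂ ℂ)) = 1 from hAG,
              Matrix.one_mul]
    show X * (A ⊗ₖ B) = (A ⊗ₖ B) * X
    have := congrArg sw goal
    rwa [sw_sw, sw_sw] at this

end PTAux

section Glue

open PTAux Kronecker

variable (n a b : ℕ)

/-- The splitting predicate. -/
abbrev pp (i : Fin (a + b + 1)) : Prop := (i : ℕ) < a + 1

/-- The reindexing equivalence. -/
noncomputable def ee : (Fin (a + b + 1) → Fin n) ≃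
    ((i : { x : Fin (a + b + 1) // pp a b x }) → Fin n) ×
    ((i : { x : Fin (a + b + 1) // ¬ pp a b x }) → Fin n) :=
  Equiv.piEquivPiSubtypeProd (pp a b) (fun _ => Fin n)

/-- Reindexed matrix. -/
noncomputable def RR (X : Matrix (Fin (a + b + 1) → Fin n) (Fin (a + b + 1) → Fin n) ℂ) :=
  X.submatrix (ee n a b).symm (ee n a b).symm

lemma RR_mul (X Y : Matrix (Fin (a + b + 1) → Fin n) (Fin (a + b + 1) → Fin n) ℂ) :
    RR n a b X * RR n a b Y = RR n a b (X * Y) :=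
  Matrix.submatrix_mul_equiv X Y _ (ee n a b).symm _

lemma commute_RR_iff (X Y : Matrix (Fin (a + b + 1) → Fin n) (Fin (a + b + 1) → Fin n) ℂ) :
    Commute X Y ↔ Commute (RR n a b X) (RR n a b Y) := by
  constructor
  · intro h
    show RR n a b X * RR n a b Y = RR n a b Y * RR n a b X
    rw [RR_mul, RR_mul, h.eq]
  · intro h
    have h' : RR n a b (X * Y) = RR n a b (Y * X) := by
      rw [← RR_mul, ← RR_mul, h.eq]
    show X * Y = Y * X
    ext f g
    have := congrFun (congrFun h' (ee n a b f)) (ee n a b g)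
    simpa [RR] using this

lemma RR_mixed (U : Matrix (Fin n) (Fin n) ℂ) :
    RR n a b (mixedKron n a b U) =
      pw _ (U.map (starRingEnd ℂ)) ⊗ₖ pw _ U := by
  ext ⟨u, v⟩ ⟨u', v'⟩
  show mixedKron n a b U ((ee n a b).symm (u, v)) ((ee n a b).symm (u', v')) = _
  rw [mixedKron]
  rw [← Fintype.prod_subtype_mul_prod_subtype (pp a b)
    (fun i => if (i : ℕ) < a + 1 then (starRingEnd ℂ) (U ((ee n a b).symm (u, v) i)
      ((ee n a b).symm (u', v') i)) else U ((ee n a b).symm (u, v) i) ((ee n a b).symm (u', v') i))]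
  simp only [Matrix.kroneckerMap_apply, pw, Matrix.of_apply, Matrix.map_apply]
  congr 1
  · apply Finset.prod_congr rfl
    intro i _
    rw [if_pos i.2]
    simp [ee, Equiv.piEquivPiSubtypeProd_symm_apply, dif_pos (Nat.lt_succ_iff.mp i.2)]
  · apply Finset.prod_congr rfl
    intro i _
    rw [if_neg i.2]
    simp [ee, Equiv.piEquivPiSubtypeProd_symm_apply, dif_neg (fun h => i.2 (Nat.lt_succ_of_le h))]

lemma RR_kron (U : Matrix (Fin n) (Fin n) ℂ) :
    RR n a b (kronPow n (a + b) U) = pw _ U ⊗ₖ pw _ U := by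
  ext ⟨u, v⟩ ⟨u', v'⟩
  show kronPow n (a + b) U ((ee n a b).symm (u, v)) ((ee n a b).symm (u', v')) = _
  rw [kronPow]
  rw [← Fintype.prod_subtype_mul_prod_subtype (pp a b)
    (fun i => U ((ee n a b).symm (u, v) i) ((ee n a b).symm (u', v') i))]
  simp only [Matrix.kroneckerMap_apply, pw, Matrix.of_apply]
  congr 1
  · apply Finset.prod_congr rfl
    intro i _
    simp [ee, Equiv.piEquivPiSubtypeProd_symm_apply, dif_pos (Nat.lt_succ_iff.mp i.2)]
  · apply Finset.prod_congr rfl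
    intro i _
    simp [ee, Equiv.piEquivPiSubtypeProd_symm_apply, dif_neg (fun h => i.2 (Nat.lt_succ_of_le h))]

lemma RR_pt (C : Matrix (Fin (a + b + 1) → Fin n) (Fin (a + b + 1) → Fin n) ℂ) :
    RR n a b (partialTranspose n a b C) = sw (RR n a b C) := by
  ext ⟨u, v⟩ ⟨u', v'⟩
  show partialTranspose n a b C ((ee n a b).symm (u, v)) ((ee n a b).symm (u', v')) =
    C ((ee n a b).symm (u', v)) ((ee n a b).symm (u, v'))
  rw [partialTranspose]
  congr 1
  · funext i
    by_cases h : (i : ℕ) < a + 1 <;>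
      simp [h, ee, Equiv.piEquivPiSubtypeProd_symm_apply]
  · funext i
    by_cases h : (i : ℕ) < a + 1 <;>
      simp [h, ee, Equiv.piEquivPiSubtypeProd_symm_apply]

lemma perU (C : Matrix (Fin (a + b + 1) → Fin n) (Fin (a + b + 1) → Fin n) ℂ)
    (U : Matrix (Fin n) (Fin n) ℂ) (hU : U ∈ Matrix.unitaryGroup (Fin n) ℂ) :
    Commute C (mixedKron n a b U) ↔
      Commute (partialTranspose n a b C) (kronPow n (a + b) U) := by
  rw [commute_RR_iff, commute_RR_iff, RR_mixed, RR_kron, RR_pt]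
  have hT : (pw (n := n) { x : Fin (a + b + 1) // pp a b x } (U.map (starRingEnd ℂ)))ᵀ
      = pw _ Uᴴ := by
    rw [pw_transpose, show (U.map (starRingEnd ℂ))ᵀ = Uᴴ from Matrix.ext fun i j => rfl]
  apply key
  · rw [hT, pw_mul]
    have : U * Uᴴ = 1 := by
      have := hU.2
      rwa [Matrix.star_eq_conjTranspose] at this
    rw [this, pw_one]
  · rw [hT, pw_mul]
    have : Uᴴ * U = 1 := by
      have := hU.1
      rwa [Matrix.star_eq_conjTranspose] at this
    rw [this, pw_one]

end Glue

theorem commute_mixedKron_iff_partialTranspose_commute_kronPow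
    (n a b : ℕ) (hn : 1 ≤ n) (ha : 1 ≤ a) (hb : 1 ≤ b)
    (C : Matrix (Fin (a + b + 1) → Fin n) (Fin (a + b + 1) → Fin n) ℂ) :
    (∀ U ∈ Matrix.unitaryGroup (Fin n) ℂ, Commute C (mixedKron n a b U)) ↔
    (∀ U ∈ Matrix.unitaryGroup (Fin n) ℂ,
      Commute (partialTranspose n a b C) (kronPow n (a + b) U)) := by
  constructor
  · intro h U hU
    exact (perU n a b C U hU).mp (h U hU)
  · intro h U hU
    exact (perU n a b C U hU).mpr (h U hU)
end

section
/- A linear map Φ : M_n(ℂ) → M_n(ℂ)^{⊗(a+b)} is (a,b)-unitarily equivariant if and only if its Choi matrix C_Φ commutes with conj(U)^{⊗(a+1)} ⊗ U^{⊗b} for all unitary U ∈ M_n(ℂ). -/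
/-!
Put `V = conj(U)^{⊗a} ⊗ U^{⊗b}` and `W = conj(U) ⊗ V`; both are unitary, so `C_Φ` commutes with
`W` iff `W C_Φ W* = C_Φ`. Conjugating a Choi matrix by `conj(U) ⊗ B` yields the Choi matrix of
`X ↦ B Φ(U* X U) B*`, because the `(p, q)` entry of `conj(U) e_ij Uᵀ` is the `(i, j)` entry of
`U* e_pq U`. A linear map is determined by its Choi matrix, so `W C_Φ W* = C_Φ` means
`V Φ(U* X U) V* = Φ(X)` for all `X`, which is equivariance under `U` after substituting
`X ↦ U X U*`.
-/

open Matrix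

/-- `conj(U)^{⊗a} ⊗ U^{⊗b}` acting on `(ℂⁿ)^{⊗(a+b)}`. -/
noncomputable def conjKronPow (n a b : ℕ) (U : Matrix (Fin n) (Fin n) ℂ) :
    Matrix (Fin (a + b) → Fin n) (Fin (a + b) → Fin n) ℂ :=
  fun f g => ∏ i : Fin (a + b),
    if (i : ℕ) < a then (starRingEnd ℂ) (U (f i) (g i)) else U (f i) (g i)

/-- The Choi matrix `C_Φ = ∑_{i,j} e_{ij} ⊗ Φ(e_{ij})` of a linear map
`Φ : M_n(ℂ) → M_n(ℂ)^{⊗(a+b)}`. -/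
def ChoiMatrix (n a b : ℕ)
    (Φ : Matrix (Fin n) (Fin n) ℂ →ₗ[ℂ]
      Matrix (Fin (a + b) → Fin n) (Fin (a + b) → Fin n) ℂ) :
    Matrix (Fin n × (Fin (a + b) → Fin n)) (Fin n × (Fin (a + b) → Fin n)) ℂ :=
  fun p q => Φ (Matrix.single p.1 q.1 1) p.2 q.2

/-- `conj(U)^{⊗(a+1)} ⊗ U^{⊗b}` acting on `ℂⁿ ⊗ (ℂⁿ)^{⊗(a+b)}`. -/
noncomputable def conjKronPowSucc (n a b : ℕ) (U : Matrix (Fin n) (Fin n) ℂ) :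
    Matrix (Fin n × (Fin (a + b) → Fin n)) (Fin n × (Fin (a + b) → Fin n)) ℂ :=
  fun p q => (starRingEnd ℂ) (U p.1 q.1) * conjKronPow n a b U p.2 q.2

open scoped Kronecker

namespace Matrix

section PiKronecker

variable {ι l m k R : Type*} [Fintype ι] [CommSemiring R]

/-- `⨂ i, M i`, with the rows and columns of the tensor product indexed by functions on `ι`. -/
def piKronecker (M : ι → Matrix l m R) : Matrix (ι → l) (ι → m) R :=
  of fun f g => ∏ i, M i (f i) (g i)

@[simp]
lemma piKronecker_apply (M : ι → Matrix l m R) (f : ι → l) (g : ι → m) :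
    piKronecker M f g = ∏ i, M i (f i) (g i) := rfl

lemma piKronecker_mul [DecidableEq ι] [Fintype m] (M : ι → Matrix l m R)
    (N : ι → Matrix m k R) :
    piKronecker M * piKronecker N = piKronecker fun i => M i * N i := by
  ext f g
  simp only [mul_apply, piKronecker_apply, Fintype.prod_sum, Finset.prod_mul_distrib]

lemma piKronecker_one [DecidableEq m] :
    piKronecker (fun _ : ι => (1 : Matrix m m R)) = 1 := by
  ext f g
  by_cases hfg : f = g
  · subst hfg
    simp
  · obtain ⟨i, hi⟩ := Function.ne_iff.mp hfg
    rw [one_apply_ne hfg, piKronecker_apply]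
    exact Finset.prod_eq_zero (Finset.mem_univ i) (one_apply_ne hi)

lemma conjTranspose_piKronecker [StarRing R] (M : ι → Matrix l m R) :
    (piKronecker M)ᴴ = piKronecker fun i => (M i)ᴴ := by
  ext f g
  simp [conjTranspose_apply, star_prod]

end PiKronecker

lemma piKronecker_mem_unitaryGroup {ι m R : Type*} [Fintype ι] [DecidableEq ι] [Fintype m]
    [DecidableEq m] [CommRing R] [StarRing R] {M : ι → Matrix m m R}
    (hM : ∀ i, M i ∈ unitaryGroup m R) :
    piKronecker M ∈ unitaryGroup (ι → m) R := by
  simp only [mem_unitaryGroup_iff, star_eq_conjTranspose] at hM ⊢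
  simp [conjTranspose_piKronecker, piKronecker_mul, hM, piKronecker_one]

lemma mul_single_one_mul_apply {l m n R : Type*} [Fintype l] [DecidableEq l] [CommSemiring R]
    (A : Matrix m l R) (D : Matrix l n R) (i j : l) (p : m) (q : n) :
    (A * single i j (1 : R) * D) p q = A p i * D j q := by
  simp [mul_apply, single, ite_and, Finset.sum_ite_eq]

section Choi

variable {m k R : Type*} [DecidableEq m] [CommSemiring R]

def choiMatrix (Φ : Matrix m m R →ₗ[R] Matrix k k R) : Matrix (m × k) (m × k) R :=
  of fun p q => Φ (single p.1 q.1 1) p.2 q.2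

lemma choiMatrix_injective [Finite m] :
    Function.Injective (choiMatrix : (Matrix m m R →ₗ[R] Matrix k k R) → _) := by
  intro Φ Ψ h
  refine ext_linearMap R fun i j => LinearMap.ext fun x => ?_
  ext f g
  have hij : Φ (single i j 1) f g = Ψ (single i j 1) f g := congrFun (congrFun h (i, f)) (j, g)
  rw [LinearMap.comp_apply, LinearMap.comp_apply, singleLinearMap_apply, ← mul_one x,
    ← smul_eq_mul, ← smul_single, map_smul, map_smul, smul_apply, smul_apply, hij]

lemma choiMatrix_eq_sum_kronecker [Fintype m] [Fintype k] (Φ : Matrix m m R →ₗ[R] Matrix k k R) :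
    choiMatrix Φ = ∑ i, ∑ j, single i j 1 ⊗ₖ Φ (single i j 1) := by
  ext ⟨p, f⟩ ⟨q, g⟩
  simp [choiMatrix, sum_apply, single, ite_and]

lemma conjTranspose_mul_single_one_mul_eq_sum [Fintype m] [StarRing R] (U : Matrix m m R)
    (p q : m) :
    Uᴴ * single p q 1 * U = ∑ i, ∑ j, (star (U p i) * U q j) • single i j 1 := by
  conv_lhs => rw [matrix_eq_sum_single (Uᴴ * single p q 1 * U)]
  simp only [mul_single_one_mul_apply, conjTranspose_apply, smul_single, smul_eq_mul, mul_one]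

lemma map_star_kronecker_mul_choiMatrix_mul_conjTranspose [Fintype m] [Fintype k]
    [DecidableEq k] [StarRing R] (U : Matrix m m R) (B : Matrix k k R)
    (Φ : Matrix m m R →ₗ[R] Matrix k k R) :
    (U.map star ⊗ₖ B) * choiMatrix Φ * (U.map star ⊗ₖ B)ᴴ =
      choiMatrix (LinearMap.mulLeftRight R (B, Bᴴ) ∘ₗ Φ ∘ₗ LinearMap.mulLeftRight R (Uᴴ, U)) := by
  rw [choiMatrix_eq_sum_kronecker, conjTranspose_kronecker]
  simp only [Matrix.mul_sum, Matrix.sum_mul, ← mul_kronecker_mul]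
  ext ⟨p, f⟩ ⟨q, g⟩
  simp only [sum_apply, kroneckerMap_apply, mul_single_one_mul_apply, choiMatrix, of_apply,
    LinearMap.comp_apply, LinearMap.mulLeftRight_apply, conjTranspose_mul_single_one_mul_eq_sum,
    map_sum, map_smul, smul_apply, smul_eq_mul, conjTranspose_apply, map_apply, star_star]

end Choi

end Matrix

lemma map_conj_eq_iff_comp_mulLeftRight_eq {R A B : Type*} [CommSemiring R] [Semiring A]
    [StarMul A] [Algebra R A] [Semiring B] [Star B] [Algebra R B] (Φ : A →ₗ[R] B) {u : A}
    (hu : u ∈ unitary A) (v : B) :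
    (∀ x, Φ (u * x * star u) = v * Φ x * star v) ↔
      LinearMap.mulLeftRight R (v, star v) ∘ₗ Φ ∘ₗ LinearMap.mulLeftRight R (star u, u) = Φ := by
  have cancel : ∀ w ∈ unitary A, ∀ x, star w * (w * x * star w) * w = x := fun w hw x => by
    rw [show star w * (w * x * star w) * w = star w * w * x * (star w * w) by
      simp only [mul_assoc], Unitary.star_mul_self_of_mem hw, one_mul, mul_one]
  refine ⟨fun h => LinearMap.ext fun x => ?_, fun h x => ?_⟩
  · simp only [LinearMap.comp_apply, LinearMap.mulLeftRight_apply]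
    rw [← h]
    simpa only [star_star] using congrArg Φ (cancel (star u) (Unitary.star_mem hu) x)
  · conv_lhs => rw [← h]
    simp only [LinearMap.comp_apply, LinearMap.mulLeftRight_apply, cancel u hu]

lemma conjKronPow_eq_piKronecker (n a b : ℕ) (U : Matrix (Fin n) (Fin n) ℂ) :
    conjKronPow n a b U =
      piKronecker fun i : Fin (a + b) => if (i : ℕ) < a then U.map star else U := by
  ext f g
  refine Finset.prod_congr rfl fun i _ => ?_
  dsimp only
  split_ifs <;> rfl

lemma conjKronPow_mem_unitaryGroup (a b : ℕ) {n : ℕ} {U : Matrix (Fin n) (Fin n) ℂ}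
    (hU : U ∈ unitaryGroup (Fin n) ℂ) :
    conjKronPow n a b U ∈ unitaryGroup (Fin (a + b) → Fin n) ℂ := by
  rw [conjKronPow_eq_piKronecker]
  refine piKronecker_mem_unitaryGroup fun i => ?_
  split_ifs
  · exact map_star_mem_unitaryGroup_iff.mpr hU
  · exact hU

lemma conjKronPowSucc_eq_kronecker (n a b : ℕ) (U : Matrix (Fin n) (Fin n) ℂ) :
    conjKronPowSucc n a b U = U.map star ⊗ₖ conjKronPow n a b U := rfl

lemma conjKronPowSucc_mem_unitaryGroup (a b : ℕ) {n : ℕ} {U : Matrix (Fin n) (Fin n) ℂ}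
    (hU : U ∈ unitaryGroup (Fin n) ℂ) :
    conjKronPowSucc n a b U ∈ unitaryGroup (Fin n × (Fin (a + b) → Fin n)) ℂ := by
  rw [conjKronPowSucc_eq_kronecker]
  exact kronecker_mem_unitary (map_star_mem_unitaryGroup_iff.mpr hU)
    (conjKronPow_mem_unitaryGroup a b hU)

lemma ChoiMatrix_eq_choiMatrix (n a b : ℕ) (Φ : Matrix (Fin n) (Fin n) ℂ →ₗ[ℂ]
      Matrix (Fin (a + b) → Fin n) (Fin (a + b) → Fin n) ℂ) :
    ChoiMatrix n a b Φ = choiMatrix Φ := rfl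

theorem ab_unitarily_equivariant_iff_choi_commutes_general (n a b : ℕ)
    (Φ : Matrix (Fin n) (Fin n) ℂ →ₗ[ℂ]
      Matrix (Fin (a + b) → Fin n) (Fin (a + b) → Fin n) ℂ) :
    (∀ U ∈ Matrix.unitaryGroup (Fin n) ℂ, ∀ X : Matrix (Fin n) (Fin n) ℂ,
        Φ (U * X * Uᴴ) = conjKronPow n a b U * Φ X * (conjKronPow n a b U)ᴴ) ↔
    (∀ U ∈ Matrix.unitaryGroup (Fin n) ℂ,
        Commute (ChoiMatrix n a b Φ) (conjKronPowSucc n a b U)) := by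
  refine forall₂_congr fun U hU => ?_
  rw [Commute.symm_iff,
    commute_unitary_iff_star_right_conjugate (conjKronPowSucc_mem_unitaryGroup a b hU),
    star_eq_conjTranspose, conjKronPowSucc_eq_kronecker, ChoiMatrix_eq_choiMatrix,
    map_star_kronecker_mul_choiMatrix_mul_conjTranspose, choiMatrix_injective.eq_iff]
  exact map_conj_eq_iff_comp_mulLeftRight_eq Φ hU _

theorem ab_unitarily_equivariant_iff_choi_commutes (n a b : ℕ) (hn : 1 ≤ n)
    (Φ : Matrix (Fin n) (Fin n) ℂ →ₗ[ℂ]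
      Matrix (Fin (a + b) → Fin n) (Fin (a + b) → Fin n) ℂ) :
    (∀ U ∈ Matrix.unitaryGroup (Fin n) ℂ, ∀ X : Matrix (Fin n) (Fin n) ℂ,
        Φ (U * X * Uᴴ) = conjKronPow n a b U * Φ X * (conjKronPow n a b U)ᴴ) ↔
    (∀ U ∈ Matrix.unitaryGroup (Fin n) ℂ,
        Commute (ChoiMatrix n a b Φ) (conjKronPowSucc n a b U)) :=
  ab_unitarily_equivariant_iff_choi_commutes_general n a b Φ
end

section
/- For each π ∈ S_{k+1} with k = a+b, the linear map Φ_π : M_n(ℂ) → M_n(ℂ)^{⊗k} whose Choi matrix is (θ_n^{⊗(a+1)} ⊗ id^{⊗b})(σ_{k+1}(π)) is (a,b)-unitarily equivariant. -/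
open Matrix

/-- The permutation representation `σ_{k+1}(π)` on `(ℂⁿ)^{⊗(k+1)}`. -/
def permMatrix (n k : ℕ) (π : Equiv.Perm (Fin (k + 1))) :
    Matrix (Fin (k + 1) → Fin n) (Fin (k + 1) → Fin n) ℂ :=
  fun f g => if (∀ i, f i = g (π⁻¹ i)) then 1 else 0

/-- The map `Φ_π : M_n(ℂ) → M_n(ℂ)^{⊗(a+b)}` whose Choi matrix is
`(θ_n^{⊗(a+1)} ⊗ id^{⊗b})(σ_{a+b+1}(π))`, recovered from its Choi matrix by
`Φ(X) = ∑_{i,j} X_{ij} Φ(e_{ij})`. -/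
noncomputable def permPhi (n a b : ℕ) (π : Equiv.Perm (Fin (a + b + 1)))
    (X : Matrix (Fin n) (Fin n) ℂ) :
    Matrix (Fin (a + b) → Fin n) (Fin (a + b) → Fin n) ℂ :=
  fun p q => ∑ i : Fin n, ∑ j : Fin n,
    X i j * partialTranspose n a b (permMatrix n (a + b) π) (Fin.cons i p) (Fin.cons j q)

/-!
The Choi matrix `C = (θ^{⊗(a+1)} ⊗ id^{⊗b})(σ(π))` is fixed by conjugation with
`W = conj(U)^{⊗(a+1)} ⊗ U^{⊗b}`. Indeed `σ(π)` commutes with `U^{⊗(a+b+1)}`, and a partial transpose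
on a set `s` of tensor factors turns conjugation by `⊗ᵢ Aᵢ` into conjugation by the tensor product
of `conj(Aᵢ)` for `i ∈ s` and `Aᵢ` for `i ∉ s`. Splitting off the first factor,
`W = conj(U) ⊗ V` with `V = conj(U)^{⊗a} ⊗ U^{⊗b}`, and the map with Choi matrix
`(A ⊗ B) C (A' ⊗ B')` is `X ↦ B Φ_C(Aᵀ X A'ᵀ) B'`; with `A = conj(U)` and `A' = Uᵀ` this
invariance of `C` reads `Φ(X) = V Φ(U* X U) V*`.
-/

open scoped Kronecker

namespace Matrix

variable {ι α κ R : Type*}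

def piKron [Fintype ι] [CommSemiring R] (A : ι → Matrix α α R) : Matrix (ι → α) (ι → α) R :=
  fun f g => ∏ i, A i (f i) (g i)

section piKron
variable [Fintype ι] [CommSemiring R]

theorem piKron_mul [DecidableEq ι] [Fintype α] (A B : ι → Matrix α α R) :
    piKron A * piKron B = piKron (A * B) := by
  ext f g
  simp only [piKron, mul_apply, Pi.mul_apply, ← Finset.prod_mul_distrib]
  exact (Fintype.prod_sum fun i x => A i (f i) x * B i x (g i)).symm

theorem piKron_one [DecidableEq α] : piKron (1 : ι → Matrix α α R) = 1 := by
  ext f g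
  simp [piKron, one_apply, Finset.prod_boole, funext_iff]

theorem piKron_conjTranspose [StarRing R] (A : ι → Matrix α α R) :
    (piKron A)ᴴ = piKron fun i => (A i)ᴴ := by
  ext f g
  simp [piKron, star_prod]

end piKron

theorem piKron_mem_unitaryGroup [Fintype ι] [DecidableEq ι] [Fintype α] [DecidableEq α]
    [CommRing R] [StarRing R] {U : ι → Matrix α α R}
    (hU : ∀ i, U i ∈ unitaryGroup α R) : piKron U ∈ unitaryGroup (ι → α) R := by
  rw [mem_unitaryGroup_iff, star_eq_conjTranspose, piKron_conjTranspose, piKron_mul]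
  convert piKron_one
  ext1 i
  simpa [star_eq_conjTranspose] using mem_unitaryGroup_iff.mp (hU i)

theorem piKron_submatrix_consEquiv {k : ℕ} [Fintype α] [CommSemiring R]
    (A : Fin (k + 1) → Matrix α α R) :
    (piKron A).submatrix (Fin.consEquiv fun _ => α) (Fin.consEquiv fun _ => α) =
      A 0 ⊗ₖ piKron (Fin.tail A) := by
  ext ⟨i, p⟩ ⟨j, q⟩
  simp [piKron, Fin.prod_univ_succ, Fin.tail]

def ofChoiMatrix [Fintype α] [Semiring R] (C : Matrix (α × κ) (α × κ) R) (X : Matrix α α R) :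
    Matrix κ κ R :=
  fun p q => ∑ i, ∑ j, X i j * C (i, p) (j, q)

section ofChoiMatrix
variable [Fintype α] [Fintype κ] [CommSemiring R]

theorem ofChoiMatrix_mul_kronecker (C : Matrix (α × κ) (α × κ) R) (A : Matrix α α R)
    (B : Matrix κ κ R) (X : Matrix α α R) :
    ofChoiMatrix (C * (A ⊗ₖ B)) X = ofChoiMatrix C (X * Aᵀ) * B := by
  ext p q
  simp only [ofChoiMatrix, mul_apply, kroneckerMap_apply, transpose_apply, Fintype.sum_prod_type,
    Finset.sum_mul, Finset.mul_sum]
  simp_rw [Finset.sum_comm (γ := α) (α := κ)]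
  refine Finset.sum_congr rfl fun x _ => Finset.sum_congr rfl fun i _ => ?_
  rw [Finset.sum_comm]
  refine Finset.sum_congr rfl fun s _ => Finset.sum_congr rfl fun j _ => ?_
  ring

theorem ofChoiMatrix_kronecker_mul (C : Matrix (α × κ) (α × κ) R) (A : Matrix α α R)
    (B : Matrix κ κ R) (X : Matrix α α R) :
    ofChoiMatrix ((A ⊗ₖ B) * C) X = B * ofChoiMatrix C (Aᵀ * X) := by
  ext p q
  simp only [ofChoiMatrix, mul_apply, kroneckerMap_apply, transpose_apply, Fintype.sum_prod_type,
    Finset.sum_mul, Finset.mul_sum]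
  simp_rw [Finset.sum_comm (γ := α) (α := κ)]
  refine Finset.sum_congr rfl fun y _ => ?_
  rw [Finset.sum_comm_cycle]
  refine Finset.sum_congr rfl fun r _ => ?_
  rw [Finset.sum_comm]
  refine Finset.sum_congr rfl fun j _ => Finset.sum_congr rfl fun i _ => ?_
  ring

theorem ofChoiMatrix_kronecker_mul_mul_kronecker (C : Matrix (α × κ) (α × κ) R)
    (A A' : Matrix α α R) (B B' : Matrix κ κ R) (X : Matrix α α R) :
    ofChoiMatrix ((A ⊗ₖ B) * C * (A' ⊗ₖ B')) X = B * ofChoiMatrix C (Aᵀ * X * A'ᵀ) * B' := by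
  rw [ofChoiMatrix_mul_kronecker, ofChoiMatrix_kronecker_mul]
  simp only [Matrix.mul_assoc]

end ofChoiMatrix

theorem mul_mul_apply_eq_sum {l m o p : Type*} [Fintype m] [Fintype o]
    [NonUnitalNonAssocSemiring R]
    (L : Matrix l m R) (M : Matrix m o R) (N : Matrix o p R) (i : l) (j : p) :
    (L * M * N) i j = ∑ x : m × o, L i x.1 * M x.1 x.2 * N x.2 j := by
  simp only [mul_apply, Finset.sum_mul, Fintype.sum_prod_type]
  exact Finset.sum_comm

def partialTransposeOn (s : Set ι) [DecidablePred (· ∈ s)] (M : Matrix (ι → α) (ι → α) R) :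
    Matrix (ι → α) (ι → α) R :=
  fun f g => M (s.piecewise g f) (s.piecewise f g)

section partialTransposeOn
variable [Fintype ι] [DecidableEq ι] [Fintype α] (s : Set ι) [DecidablePred (· ∈ s)]

theorem partialTransposeOn_piKron_mul_mul [CommSemiring R] (A B : ι → Matrix α α R)
    (M : Matrix (ι → α) (ι → α) R) :
    partialTransposeOn s (piKron A * M * piKron B) =
      piKron (s.piecewise (fun i => (B i)ᵀ) A) * partialTransposeOn s M *
        piKron (s.piecewise (fun i => (A i)ᵀ) B) := by
  have hswap : Function.Involutive fun x : (ι → α) × (ι → α) =>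
      (s.piecewise x.2 x.1, s.piecewise x.1 x.2) := by
    rintro ⟨k, k'⟩
    ext i <;> by_cases hi : i ∈ s <;> simp [hi]
  ext f g
  simp only [partialTransposeOn, mul_mul_apply_eq_sum]
  refine (Equiv.sum_comp (hswap.toPerm _) _).symm.trans (Finset.sum_congr rfl ?_)
  rintro ⟨k, k'⟩ -
  have hfactor : piKron A (s.piecewise g f) (s.piecewise k' k) *
      piKron B (s.piecewise k k') (s.piecewise f g) =
      piKron (s.piecewise (fun i => (B i)ᵀ) A) f k *
        piKron (s.piecewise (fun i => (A i)ᵀ) B) k' g := by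
    simp only [piKron, ← Finset.prod_mul_distrib]
    refine Finset.prod_congr rfl fun i _ => ?_
    by_cases hi : i ∈ s <;> simp [hi, mul_comm]
  simp only [Function.Involutive.coe_toPerm]
  rw [mul_right_comm, hfactor, mul_right_comm]

theorem partialTransposeOn_piKron_conj [CommSemiring R] [StarRing R] (A : ι → Matrix α α R)
    (M : Matrix (ι → α) (ι → α) R) :
    partialTransposeOn s (piKron A * M * (piKron A)ᴴ) =
      piKron (s.piecewise (fun i => (A i).map star) A) * partialTransposeOn s M *
        (piKron (s.piecewise (fun i => (A i).map star) A))ᴴ := by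
  rw [piKron_conjTranspose, piKron_conjTranspose, partialTransposeOn_piKron_mul_mul]
  congr 2
  ext1 i
  by_cases hi : i ∈ s <;> simp [hi, ← transpose_conjTranspose]

end partialTransposeOn

end Matrix

section permMatrix
variable {n k : ℕ} (π : Equiv.Perm (Fin (k + 1)))

theorem permMatrix_mul {κ : Type*} (M : Matrix (Fin (k + 1) → Fin n) κ ℂ) :
    permMatrix n k π * M = M.submatrix (· ∘ π) id := by
  ext f g
  have hperm : ∀ h : Fin (k + 1) → Fin n, (∀ i, f i = h (π⁻¹ i)) ↔ f ∘ π = h := fun h =>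
    ⟨fun H => funext fun j => by simpa using H (π j), by rintro rfl i; simp⟩
  simp only [mul_apply, permMatrix, ite_mul, one_mul, zero_mul, hperm, Finset.sum_ite_eq,
    Finset.mem_univ, if_true, submatrix_apply, id]

theorem mul_permMatrix {κ : Type*} (M : Matrix κ (Fin (k + 1) → Fin n) ℂ) :
    M * permMatrix n k π = M.submatrix id (· ∘ ⇑π⁻¹) := by
  ext f g
  have hperm : ∀ h : Fin (k + 1) → Fin n, (∀ i, h i = g (π⁻¹ i)) ↔ h = g ∘ ⇑π⁻¹ := fun h =>
    funext_iff.symm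
  simp only [mul_apply, permMatrix, mul_ite, mul_one, mul_zero, hperm, Finset.sum_ite_eq',
    Finset.mem_univ, if_true, submatrix_apply, id]

theorem commute_piKron_const_permMatrix (A : Matrix (Fin n) (Fin n) ℂ) :
    Commute (piKron fun _ => A) (permMatrix n k π) := by
  rw [Commute, SemiconjBy, mul_permMatrix, permMatrix_mul]
  ext f g
  simp only [piKron, submatrix_apply, id, Function.comp_apply]
  rw [← Equiv.prod_comp π]
  simp

theorem piKron_const_conj_permMatrix {U : Matrix (Fin n) (Fin n) ℂ}
    (hU : U ∈ unitaryGroup (Fin n) ℂ) :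
    (piKron fun _ => U) * permMatrix n k π * (piKron fun _ => U)ᴴ = permMatrix n k π := by
  rw [(commute_piKron_const_permMatrix π U).eq, Matrix.mul_assoc, ← star_eq_conjTranspose,
    mem_unitaryGroup_iff.mp (piKron_mem_unitaryGroup fun _ => hU), Matrix.mul_one]

end permMatrix

theorem partialTranspose_eq_partialTransposeOn (n a b : ℕ) :
    partialTranspose n a b = partialTransposeOn {i : Fin (a + b + 1) | (i : ℕ) < a + 1} :=
  rfl

theorem conjKronPow_eq_piKron (n a b : ℕ) (U : Matrix (Fin n) (Fin n) ℂ) :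
    conjKronPow n a b U = piKron fun i : Fin (a + b) => if (i : ℕ) < a then U.map star else U := by
  ext f g
  simp only [conjKronPow, piKron]
  refine Finset.prod_congr rfl fun i _ => ?_
  split_ifs <;> rfl

def permPhiChoi (n a b : ℕ) (π : Equiv.Perm (Fin (a + b + 1))) :
    Matrix (Fin n × (Fin (a + b) → Fin n)) (Fin n × (Fin (a + b) → Fin n)) ℂ :=
  (partialTranspose n a b (permMatrix n (a + b) π)).submatrix
    (Fin.consEquiv fun _ => Fin n) (Fin.consEquiv fun _ => Fin n)

theorem permPhi_eq_ofChoiMatrix (n a b : ℕ) (π : Equiv.Perm (Fin (a + b + 1)))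
    (X : Matrix (Fin n) (Fin n) ℂ) :
    permPhi n a b π X = ofChoiMatrix (permPhiChoi n a b π) X :=
  rfl

theorem permPhiChoi_eq_conj (n a b : ℕ) (π : Equiv.Perm (Fin (a + b + 1)))
    {U : Matrix (Fin n) (Fin n) ℂ} (hU : U ∈ unitaryGroup (Fin n) ℂ) :
    permPhiChoi n a b π = (U.map star ⊗ₖ conjKronPow n a b U) * permPhiChoi n a b π *
      (U.map star ⊗ₖ conjKronPow n a b U)ᴴ := by
  set S : Set (Fin (a + b + 1)) := {i | (i : ℕ) < a + 1}
  set W := piKron (S.piecewise (fun _ => U.map star) fun _ => U)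
  set e := Fin.consEquiv fun _ : Fin (a + b + 1) => Fin n
  have hC : partialTranspose n a b (permMatrix n (a + b) π) =
      W * partialTranspose n a b (permMatrix n (a + b) π) * Wᴴ := by
    rw [partialTranspose_eq_partialTransposeOn]
    conv_lhs => rw [← piKron_const_conj_permMatrix π hU]
    exact partialTransposeOn_piKron_conj S _ _
  have hW : W.submatrix e e = U.map star ⊗ₖ conjKronPow n a b U := by
    rw [piKron_submatrix_consEquiv, conjKronPow_eq_piKron]
    congr 2
    ext1 i
    simp [S, Fin.tail, Set.piecewise, Fin.val_succ]
  rw [permPhiChoi]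
  conv_lhs => rw [hC]
  rw [← hW, conjTranspose_submatrix, submatrix_mul_equiv, submatrix_mul_equiv]

theorem permPhi_ab_unitarily_equivariant_general (n a b : ℕ)
    (π : Equiv.Perm (Fin (a + b + 1)))
    (U : Matrix (Fin n) (Fin n) ℂ) (hU : U ∈ Matrix.unitaryGroup (Fin n) ℂ)
    (X : Matrix (Fin n) (Fin n) ℂ) :
    permPhi n a b π (U * X * Uᴴ) =
      conjKronPow n a b U * permPhi n a b π X * (conjKronPow n a b U)ᴴ := by
  have hUU : Uᴴ * U = 1 := mem_unitaryGroup_iff'.mp hU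
  have hX : Uᴴ * (U * X * Uᴴ) * U = X := by
    simp only [← Matrix.mul_assoc, hUU, Matrix.one_mul]
    rw [Matrix.mul_assoc, hUU, Matrix.mul_one]
  have hconj : (U.map star)ᴴᵀ = U := by ext; simp
  rw [permPhi_eq_ofChoiMatrix, permPhiChoi_eq_conj n a b π hU, conjTranspose_kronecker,
    ofChoiMatrix_kronecker_mul_mul_kronecker, hconj, show (U.map star)ᵀ = Uᴴ from rfl, hX,
    permPhi_eq_ofChoiMatrix]

theorem permPhi_ab_unitarily_equivariant (n a b : ℕ) (hn : 1 ≤ n)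
    (π : Equiv.Perm (Fin (a + b + 1)))
    (U : Matrix (Fin n) (Fin n) ℂ) (hU : U ∈ Matrix.unitaryGroup (Fin n) ℂ)
    (X : Matrix (Fin n) (Fin n) ℂ) :
    permPhi n a b π (U * X * Uᴴ) =
      conjKronPow n a b U * permPhi n a b π X * (conjKronPow n a b U)ᴴ :=
  permPhi_ab_unitarily_equivariant_general n a b π U hU X
end

section
/- With Φ as defined by (Φ(X)ψ)(U) = φ(U* X U) ψ(U) on L²(U_n, ℂ^N): if φ : M_n(ℂ) → M_N(ℂ) is t-positive, then Φ is t-positive; i.e., for every positive semi-definite element ρ ∈ M_t(ℂ) ⊗ M_n(ℂ), (id_t ⊗ Φ)(ρ) is a positive operator on ℂᵗ ⊗ L²(U_n, ℂ^N). -/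
/-! `(id_t ⊗ Φ)(ρ)` acts on `ℂᵗ ⊗ L²(U_n, ℂ^N)` as multiplication by the matrix-valued function
`U ↦ (id_t ⊗ φ)((1 ⊗ U)* ρ (1 ⊗ U))`. Conjugation preserves positive semi-definiteness and `φ` is
`t`-positive, so this function is pointwise positive semi-definite, and the quadratic form of
`(id_t ⊗ Φ)(ρ)` is the integral of a nonnegative function. -/

open Matrix MeasureTheory ComplexOrder Kronecker

noncomputable section

variable (n N t : ℕ)

instance unitaryGroup.continuousInv : ContinuousInv (Matrix.unitaryGroup (Fin n) ℂ) := by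
  constructor
  rw [continuous_induced_rng]
  exact continuous_star.comp continuous_subtype_val

instance unitaryGroup.topologicalGroup : IsTopologicalGroup (Matrix.unitaryGroup (Fin n) ℂ) := {}

instance unitaryGroup.measurableSpace : MeasurableSpace (Matrix.unitaryGroup (Fin n) ℂ) :=
  borel _

/-- `(id_t ⊗ φ)` applied to an element of `M_t(ℂ) ⊗ M_n(ℂ)`. -/
def idTensor (φ : Matrix (Fin n) (Fin n) ℂ →ₗ[ℂ] Matrix (Fin N) (Fin N) ℂ)
    (ρ : Matrix (Fin t × Fin n) (Fin t × Fin n) ℂ) :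
    Matrix (Fin t × Fin N) (Fin t × Fin N) ℂ :=
  fun p q => φ (Matrix.of fun a b => ρ (p.1, a) (q.1, b)) p.2 q.2

/-- The block of `(id_t ⊗ Φ)(ρ)` at the point `U` of the unitary group, where
`Φ` is the map `(Φ(X)ψ)(U) = φ(U* X U) ψ(U)` on `L²(U_n, ℂ^N)`:
it equals `(id_t ⊗ φ)((1 ⊗ U)* ρ (1 ⊗ U))`. -/
def idTensorPhiAt (φ : Matrix (Fin n) (Fin n) ℂ →ₗ[ℂ] Matrix (Fin N) (Fin N) ℂ)
    (ρ : Matrix (Fin t × Fin n) (Fin t × Fin n) ℂ)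
    (U : Matrix.unitaryGroup (Fin n) ℂ) :
    Matrix (Fin t × Fin N) (Fin t × Fin N) ℂ :=
  idTensor n N t φ
    (((1 : Matrix (Fin t) (Fin t) ℂ) ⊗ₖ (U : Matrix (Fin n) (Fin n) ℂ))ᴴ * ρ *
      ((1 : Matrix (Fin t) (Fin t) ℂ) ⊗ₖ (U : Matrix (Fin n) (Fin n) ℂ)))

variable {n N t} in
theorem idTensorPhiAt_posSemidef
    {φ : Matrix (Fin n) (Fin n) ℂ →ₗ[ℂ] Matrix (Fin N) (Fin N) ℂ}
    (hφ : ∀ ρ : Matrix (Fin t × Fin n) (Fin t × Fin n) ℂ,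
        ρ.PosSemidef → (idTensor n N t φ ρ).PosSemidef)
    {ρ : Matrix (Fin t × Fin n) (Fin t × Fin n) ℂ} (hρ : ρ.PosSemidef)
    (U : Matrix.unitaryGroup (Fin n) ℂ) :
    (idTensorPhiAt n N t φ ρ U).PosSemidef :=
  hφ _ (hρ.conjTranspose_mul_mul_same _)

theorem PhiReg_t_positive_of_t_positive
    (μ : Measure (Matrix.unitaryGroup (Fin n) ℂ))
    (φ : Matrix (Fin n) (Fin n) ℂ →ₗ[ℂ] Matrix (Fin N) (Fin N) ℂ)
    (hφ : ∀ ρ : Matrix (Fin t × Fin n) (Fin t × Fin n) ℂ,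
        ρ.PosSemidef → (idTensor n N t φ ρ).PosSemidef)
    (ρ : Matrix (Fin t × Fin n) (Fin t × Fin n) ℂ) (hρ : ρ.PosSemidef)
    (ψ : Matrix.unitaryGroup (Fin n) ℂ → (Fin t × Fin N → ℂ)) :
    0 ≤ ∫ U, star (ψ U) ⬝ᵥ (idTensorPhiAt n N t φ ρ U).mulVec (ψ U) ∂μ :=
  integral_nonneg fun U => (idTensorPhiAt_posSemidef hφ hρ U).dotProduct_mulVec_nonneg (ψ U)
end
end
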